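/- Let q ≥ 1, let Σ be a symmetric positive definite q×q real matrix, let 0 < a < q/2, and let x ∈ ℝ^q with x ≠ 0. Then p_eg(x; Σ, a, 2) = ∫_0^1 [Γ(q/2) / (Γ(q/2 − a) Γ(a))] · (1 − u)^(q/2 − a − 1) · u^(a − 1) · (2π)^(−q/2) · det(u·Σ)^(−1/2) · exp(−xᵀΣ⁻¹x / (2u)) du; that is, the EG density with b = 2 is a mixture of centered Gaussian densities with covariances u·Σ, where the scale u has a Beta(q/2 − a, a) density. -/

import Mathlib

/-!
Write `t = xᵀΣ⁻¹x` and `c = q/2 - a`. Since `det (uΣ) = u^q det Σ`, the mixture integral is a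
constant times `∫₀¹ (1-u)^(c-1) u^(-c-1) e^(-t/(2u)) du`. The substitution `u = 1/(1+v)` turns this
into `e^(-t/2) ∫₀^∞ v^(c-1) e^(-tv/2) dv = e^(-t/2) Γ(c) (t/2)^(-c)`, and the remaining constants
match those of the elliptical gamma density.
-/

open Matrix Classical

/-- Principal (symmetric positive semidefinite) square root of a matrix;
junk value `0` if the matrix is not positive semidefinite. -/
noncomputable def matSqrt {q : ℕ} (A : Matrix (Fin q) (Fin q) ℝ) : Matrix (Fin q) (Fin q) ℝ :=
  if h : A.PosSemidef then
    (h.1.eigenvectorUnitary : Matrix (Fin q) (Fin q) ℝ) * diagonal (Real.sqrt ∘ h.1.eigenvalues) *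
      (star h.1.eigenvectorUnitary : Matrix (Fin q) (Fin q) ℝ) else 0

/-- Loewner order: `loewnerLE A B` iff `B - A` is positive semidefinite. -/
def loewnerLE {q : ℕ} (A B : Matrix (Fin q) (Fin q) ℝ) : Prop := (B - A).PosSemidef

/-- Largest eigenvalue of a (Hermitian) matrix; junk value `0` otherwise. -/
noncomputable def maxEig {q : ℕ} (A : Matrix (Fin q) (Fin q) ℝ) : ℝ :=
  if h : A.IsHermitian then ⨆ i, h.eigenvalues i else 0

/-- Smallest eigenvalue of a (Hermitian) matrix; junk value `0` otherwise. -/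
noncomputable def minEig {q : ℕ} (A : Matrix (Fin q) (Fin q) ℝ) : ℝ :=
  if h : A.IsHermitian then ⨅ i, h.eigenvalues i else 0

/-- The elliptical gamma density
`p_eg(x; Σ, a, b) = Γ(q/2) / (π^(q/2) Γ(a) b^a det(Σ)^(1/2)) (xᵀΣ⁻¹x)^(a-q/2) exp(-xᵀΣ⁻¹x/b)`. -/
noncomputable def pEG {q : ℕ} (S : Matrix (Fin q) (Fin q) ℝ) (a b : ℝ) (x : Fin q → ℝ) : ℝ :=
  Real.Gamma ((q : ℝ) / 2) /
    (Real.pi ^ ((q : ℝ) / 2) * Real.Gamma a * b ^ a * S.det ^ ((1 : ℝ) / 2)) *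
    (x ⬝ᵥ S⁻¹ *ᵥ x) ^ (a - (q : ℝ) / 2) * Real.exp (-(x ⬝ᵥ S⁻¹ *ᵥ x) / b)

open Real Set MeasureTheory

lemma image_inv_one_add_Ioi : (fun v : ℝ => (1 + v)⁻¹) '' Ioi 0 = Ioo 0 1 := by
  ext u
  simp only [mem_image, mem_Ioi, mem_Ioo]
  constructor
  · rintro ⟨v, hv, rfl⟩
    exact ⟨inv_pos.mpr (by linarith), inv_lt_one_of_one_lt₀ (by linarith)⟩
  · rintro ⟨hu0, hu1⟩
    exact ⟨u⁻¹ - 1, by linarith [one_lt_inv₀ hu0 |>.mpr hu1], by simp⟩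

lemma integral_Ioo_zero_one_eq_integral_Ioi {E : Type*} [NormedAddCommGroup E]
    [NormedSpace ℝ E] (f : ℝ → E) :
    ∫ u in Ioo (0 : ℝ) 1, f u = ∫ v in Ioi (0 : ℝ), ((1 + v) ^ 2)⁻¹ • f (1 + v)⁻¹ := by
  have hderiv : ∀ v ∈ Ioi (0 : ℝ),
      HasDerivWithinAt (fun v : ℝ => (1 + v)⁻¹) (-1 / (1 + v) ^ 2) (Ioi 0) v := fun v hv => by
    have h1v : (1 : ℝ) + v ≠ 0 := by linarith [mem_Ioi.mp hv]
    exact (((hasDerivAt_id v).const_add 1).inv h1v).hasDerivWithinAt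
  have hinj : InjOn (fun v : ℝ => (1 + v)⁻¹) (Ioi 0) := fun v _ w _ h => by
    simpa using inv_inj.mp h
  rw [← image_inv_one_add_Ioi,
    integral_image_eq_integral_abs_deriv_smul measurableSet_Ioi hderiv hinj]
  refine setIntegral_congr_fun measurableSet_Ioi fun v hv => ?_
  rw [abs_div, abs_neg, abs_one, abs_of_pos (by have : (0 : ℝ) < v := hv; positivity), one_div]

lemma integral_one_sub_rpow_mul_rpow_mul_exp_neg_div {c s : ℝ} (hc : 0 < c) (hs : 0 < s) :
    ∫ u in Ioo (0 : ℝ) 1, (1 - u) ^ (c - 1) * u ^ (-c - 1) * exp (-s / u)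
      = Gamma c * s ^ (-c) * exp (-s) := by
  have hsubst : ∀ v ∈ Ioi (0 : ℝ),
      ((1 + v) ^ 2)⁻¹ • ((1 - (1 + v)⁻¹) ^ (c - 1) * ((1 + v)⁻¹) ^ (-c - 1) * exp (-s / (1 + v)⁻¹))
        = exp (-s) * (v ^ (c - 1) * exp (-(s * v))) := by
    intro v hv
    have hv : 0 < v := hv
    have hw : 0 < 1 + v := by linarith
    have hbase : 1 - (1 + v)⁻¹ = v * (1 + v)⁻¹ := by field_simp; ring
    rw [hbase, mul_rpow hv.le (inv_nonneg.mpr hw.le), inv_rpow hw.le, inv_rpow hw.le,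
      ← rpow_neg hw.le, ← rpow_neg hw.le, div_inv_eq_mul,
      show -s * (1 + v) = -s + -(s * v) by ring, exp_add, smul_eq_mul,
      ← rpow_two, ← rpow_neg hw.le]
    have hcancel : (1 + v) ^ (-(2 : ℝ)) * (1 + v) ^ (-(c - 1)) * (1 + v) ^ (-(-c - 1)) = 1 := by
      rw [← rpow_add hw, ← rpow_add hw, show -(2 : ℝ) + -(c - 1) + -(-c - 1) = 0 by ring,
        rpow_zero]
    linear_combination v ^ (c - 1) * (exp (-s) * exp (-(s * v))) * hcancel
  rw [integral_Ioo_zero_one_eq_integral_Ioi, setIntegral_congr_fun measurableSet_Ioi hsubst,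
    integral_const_mul, integral_rpow_mul_exp_neg_mul_Ioi hc hs, one_div, inv_rpow hs.le,
    ← rpow_neg hs.le]
  ring

lemma Matrix.det_smul_rpow {n : Type*} [Fintype n] [DecidableEq n] {u : ℝ} (hu : 0 ≤ u)
    {A : Matrix n n ℝ} (hA : 0 ≤ A.det) (r : ℝ) :
    (u • A).det ^ r = u ^ (Fintype.card n * r) * A.det ^ r := by
  rw [Matrix.det_smul, mul_rpow (by positivity) hA, ← rpow_natCast, ← rpow_mul hu]

lemma pEG_two_eq_mul_gamma_mul_rpow_mul_exp {q : ℕ} {S : Matrix (Fin q) (Fin q) ℝ}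
    (hdet : 0 < S.det) (a : ℝ) {x : Fin q → ℝ} (ht : 0 ≤ x ⬝ᵥ S⁻¹ *ᵥ x)
    (hc : Gamma ((q : ℝ) / 2 - a) ≠ 0) :
    pEG S a 2 x = Gamma (q / 2) / (Gamma (q / 2 - a) * Gamma a) *
      ((2 * π) ^ (-(q : ℝ) / 2) * S.det ^ (-(1 : ℝ) / 2)) *
      (Gamma (q / 2 - a) * ((x ⬝ᵥ S⁻¹ *ᵥ x) / 2) ^ (-((q : ℝ) / 2 - a)) *
        exp (-((x ⬝ᵥ S⁻¹ *ᵥ x) / 2))) := by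
  unfold pEG
  set t := x ⬝ᵥ S⁻¹ *ᵥ x
  set c := (q : ℝ) / 2 - a with hc_def
  have htwo : (2 : ℝ) ^ (-(q : ℝ) / 2) / 2 ^ (-c) = ((2 : ℝ) ^ a)⁻¹ := by
    rw [← rpow_sub zero_lt_two, ← rpow_neg zero_le_two, hc_def]
    ring_nf
  have hpowers : (2 * π) ^ (-(q : ℝ) / 2) * (t / 2) ^ (-c)
      = ((2 : ℝ) ^ a)⁻¹ * (π ^ ((q : ℝ) / 2))⁻¹ * t ^ (a - q / 2) := by
    rw [mul_rpow zero_le_two pi_pos.le, div_rpow ht zero_le_two, neg_div,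
      rpow_neg pi_pos.le, show a - q / 2 = -c by ring, ← htwo]
    ring_nf
  calc _ = Gamma (q / 2) / Gamma a * S.det ^ (-(1 : ℝ) / 2) *
          ((2 * π) ^ (-(q : ℝ) / 2) * (t / 2) ^ (-c)) * exp (-(t / 2)) := by
        rw [hpowers, neg_div 2 t, neg_div 2 (1 : ℝ), rpow_neg hdet.le]
        field_simp
    _ = _ := by field_simp

theorem pEG_eq_beta_mixture_of_gaussians_general {q : ℕ}
    {S : Matrix (Fin q) (Fin q) ℝ} (hS : S.PosDef)
    {a : ℝ} (haq : a < (q : ℝ) / 2)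
    (x : Fin q → ℝ) (hx : x ≠ 0) :
    pEG S a 2 x = ∫ u in Set.Ioo (0 : ℝ) 1,
      Real.Gamma ((q : ℝ) / 2) / (Real.Gamma ((q : ℝ) / 2 - a) * Real.Gamma a) *
        ((1 - u) ^ ((q : ℝ) / 2 - a - 1) * u ^ (a - 1)) *
        ((2 * Real.pi) ^ (-(q : ℝ) / 2) * (Matrix.det (u • S)) ^ (-(1 : ℝ) / 2) *
          Real.exp (-(x ⬝ᵥ S⁻¹ *ᵥ x) / (2 * u))) := by
  set t := x ⬝ᵥ S⁻¹ *ᵥ x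
  set c := (q : ℝ) / 2 - a with hc_def
  have ht : 0 < t := by simpa using hS.inv.dotProduct_mulVec_pos hx
  have hc : 0 < c := by linarith
  have hdet : 0 < S.det := hS.det_pos
  have hintegrand : ∀ u ∈ Ioo (0 : ℝ) 1,
      Gamma (q / 2) / (Gamma c * Gamma a) * ((1 - u) ^ (c - 1) * u ^ (a - 1)) *
        ((2 * π) ^ (-(q : ℝ) / 2) * (u • S).det ^ (-(1 : ℝ) / 2) * exp (-t / (2 * u)))
      = Gamma (q / 2) / (Gamma c * Gamma a) * ((2 * π) ^ (-(q : ℝ) / 2) * S.det ^ (-(1 : ℝ) / 2)) *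
          ((1 - u) ^ (c - 1) * u ^ (-c - 1) * exp (-(t / 2) / u)) := by
    rintro u ⟨hu, -⟩
    rw [Matrix.det_smul_rpow hu.le hdet.le, Fintype.card_fin,
      show u ^ (-c - 1) = u ^ (a - 1) * u ^ ((q : ℝ) * (-1 / 2)) by
        rw [← rpow_add hu, hc_def]; ring_nf]
    ring_nf
  rw [setIntegral_congr_fun measurableSet_Ioo hintegrand, integral_const_mul,
    integral_one_sub_rpow_mul_rpow_mul_exp_neg_div hc (half_pos ht)]
  exact pEG_two_eq_mul_gamma_mul_rpow_mul_exp hdet a ht.le (Gamma_pos_of_pos hc).ne'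

/-- For `0 < a < q/2` and `b = 2`, the elliptical gamma density is a mixture of centered
Gaussian densities with covariances `u·Σ`, where the scale `u` has a `Beta(q/2 − a, a)`
density on `(0, 1)`. -/
theorem pEG_eq_beta_mixture_of_gaussians {q : ℕ} (hq : 1 ≤ q)
    {S : Matrix (Fin q) (Fin q) ℝ} (hS : S.PosDef)
    {a : ℝ} (ha : 0 < a) (haq : a < (q : ℝ) / 2)
    (x : Fin q → ℝ) (hx : x ≠ 0) :
    pEG S a 2 x = ∫ u in Set.Ioo (0 : ℝ) 1,
      Real.Gamma ((q : ℝ) / 2) / (Real.Gamma ((q : ℝ) / 2 - a) * Real.Gamma a) *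
        ((1 - u) ^ ((q : ℝ) / 2 - a - 1) * u ^ (a - 1)) *
        ((2 * Real.pi) ^ (-(q : ℝ) / 2) * (Matrix.det (u • S)) ^ (-(1 : ℝ) / 2) *
          Real.exp (-(x ⬝ᵥ S⁻¹ *ᵥ x) / (2 * u))) :=
  pEG_eq_beta_mixture_of_gaussians_general hS haq x hx
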